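/- Every 0-simplifying Tarski monoid is piecewise factorizable. -/

import Mathlib

universe u

/-- An inverse monoid with zero: every element `a` has a unique generalized
inverse `a⁻¹`, and `0` is an absorbing element. -/
class InverseMonoidWithZero (S : Type u) extends Monoid S, Zero S, Inv S where
  zero_mul' : ∀ a : S, 0 * a = 0
  mul_zero' : ∀ a : S, a * 0 = 0
  mul_inv_mul : ∀ a : S, a * a⁻¹ * a = a
  inv_mul_inv : ∀ a : S, a⁻¹ * a * a⁻¹ = a⁻¹
  inv_unique : ∀ a b : S, a * b * a = a → b * a * b = b → b = a⁻¹

section BasicDefs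

variable {S : Type u}

/-- The natural partial order: `a ≤ b` iff `a = e * b` for some idempotent `e`. -/
def nle [InverseMonoidWithZero S] (a b : S) : Prop :=
  ∃ e : S, e * e = e ∧ a = e * b

/-- `a` and `b` are compatible if `a * b⁻¹` and `a⁻¹ * b` are idempotents. -/
def Compat [InverseMonoidWithZero S] (a b : S) : Prop :=
  (a * b⁻¹) * (a * b⁻¹) = a * b⁻¹ ∧ (a⁻¹ * b) * (a⁻¹ * b) = a⁻¹ * b

/-- `a` and `b` are orthogonal if `a * b⁻¹ = 0` and `a⁻¹ * b = 0`. -/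
def Orth [InverseMonoidWithZero S] (a b : S) : Prop :=
  a * b⁻¹ = 0 ∧ a⁻¹ * b = 0

end BasicDefs

/-- A distributive inverse monoid: every compatible pair has a join (for the
natural partial order), recorded by `sup`, and multiplication distributes over
these binary joins. -/
class DistributiveInverseMonoid (S : Type u) extends InverseMonoidWithZero S where
  sup : S → S → S
  le_sup_left : ∀ a b : S, Compat a b → nle a (sup a b)
  le_sup_right : ∀ a b : S, Compat a b → nle b (sup a b)
  sup_le : ∀ a b c : S, Compat a b → nle a c → nle b c → nle (sup a b) c
  mul_sup : ∀ a b c : S, Compat a b → c * sup a b = sup (c * a) (c * b)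
  sup_mul : ∀ a b c : S, Compat a b → sup a b * c = sup (a * c) (b * c)

/-- A Boolean inverse monoid: a distributive inverse monoid whose idempotents
form a Boolean algebra under the natural partial order; `compl` records the
complementation on idempotents. -/
class BooleanInverseMonoid (S : Type u) extends DistributiveInverseMonoid S where
  compl : S → S
  compl_idem : ∀ e : S, e * e = e → compl e * compl e = compl e
  mul_compl : ∀ e : S, e * e = e → e * compl e = 0
  sup_compl : ∀ e : S, e * e = e → sup e (compl e) = 1

/-- A Boolean inverse ∧-monoid: a Boolean inverse monoid in which every pair of
elements has a meet with respect to the natural partial order. -/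
class BooleanInverseMeetMonoid (S : Type u) extends BooleanInverseMonoid S where
  inf : S → S → S
  inf_le_left : ∀ a b : S, nle (inf a b) a
  inf_le_right : ∀ a b : S, nle (inf a b) b
  le_inf : ∀ a b c : S, nle c a → nle c b → nle c (inf a b)

section MoreDefs

variable {S : Type u}

/-- The join of a compatible pair. -/
def bsup [DistributiveInverseMonoid S] (a b : S) : S := DistributiveInverseMonoid.sup a b

/-- Complementation in the Boolean algebra of idempotents. -/
def bcompl [BooleanInverseMonoid S] (e : S) : S := BooleanInverseMonoid.compl e

/-- The binary meet. -/
def binf [BooleanInverseMeetMonoid S] (a b : S) : S := BooleanInverseMeetMonoid.inf a b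

/-- The fixed-point operator `φ(s) = s ∧ 1`. -/
def phi [BooleanInverseMeetMonoid S] (s : S) : S := binf s 1

/-- The support operator `σ(s) = \overline{φ(s)} ⋅ s⁻¹ s`. -/
def sigma [BooleanInverseMeetMonoid S] (s : S) : S := bcompl (phi s) * (s⁻¹ * s)

/-- An infinitesimal is a non-zero element that squares to zero. -/
def Infinitesimal [InverseMonoidWithZero S] (a : S) : Prop := a ≠ 0 ∧ a * a = 0

/-- A (two-sided) ideal. -/
def IsMIdeal [InverseMonoidWithZero S] (I : Set S) : Prop :=
  I.Nonempty ∧ ∀ a ∈ I, ∀ s : S, s * a ∈ I ∧ a * s ∈ I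

/-- A ∨-ideal: an ideal closed under joins of compatible pairs. -/
def IsVIdeal [DistributiveInverseMonoid S] (I : Set S) : Prop :=
  IsMIdeal I ∧ ∀ a ∈ I, ∀ b ∈ I, Compat a b → bsup a b ∈ I

end MoreDefs

/-- 0-simplifying: the only ∨-ideals are `{0}` and `S`. -/
def ZeroSimplifying (S : Type u) [DistributiveInverseMonoid S] : Prop :=
  ∀ I : Set S, IsVIdeal I → I = {0} ∨ I = Set.univ

/-- 0-simple: non-trivial and the only ideals are `{0}` and `S`. -/
def ZeroSimple (S : Type u) [InverseMonoidWithZero S] : Prop :=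
  (∃ s : S, s ≠ 0) ∧ ∀ I : Set S, IsMIdeal I → I = {0} ∨ I = Set.univ

/-- Fundamental: every element commuting with all idempotents is an idempotent. -/
def Fundamental (S : Type u) [InverseMonoidWithZero S] : Prop :=
  ∀ a : S, (∀ e : S, e * e = e → a * e = e * a) → a * a = a

/-- The Boolean algebra of idempotents is atomless. -/
def IdemAtomless (S : Type u) [InverseMonoidWithZero S] : Prop :=
  ∀ e : S, e * e = e → e ≠ 0 → ∃ f : S, f * f = f ∧ f ≠ 0 ∧ nle f e ∧ f ≠ e

section Filters

variable {S : Type u}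

/-- A filter in a Boolean inverse ∧-monoid: a nonempty subset closed under
binary meets and upward closed in the natural partial order. -/
def IsMFilter [BooleanInverseMeetMonoid S] (A : Set S) : Prop :=
  A.Nonempty ∧ (∀ a ∈ A, ∀ b ∈ A, binf a b ∈ A) ∧ ∀ a ∈ A, ∀ b : S, nle a b → b ∈ A

/-- An ultrafilter: a maximal proper filter. -/
def IsMUltrafilter [BooleanInverseMeetMonoid S] (A : Set S) : Prop :=
  IsMFilter A ∧ (0 : S) ∉ A ∧ ∀ B : Set S, IsMFilter B → (0 : S) ∉ B → A ⊆ B → A = B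

/-- A filter of the Boolean algebra of idempotents (meet of idempotents is
their product). -/
def IsIdemFilter [InverseMonoidWithZero S] (F : Set S) : Prop :=
  F.Nonempty ∧ (∀ e ∈ F, e * e = e) ∧ (∀ e ∈ F, ∀ f ∈ F, e * f ∈ F) ∧
    ∀ e ∈ F, ∀ f : S, f * f = f → nle e f → f ∈ F

/-- An ultrafilter of the Boolean algebra of idempotents. -/
def IsIdemUltrafilter [InverseMonoidWithZero S] (F : Set S) : Prop :=
  IsIdemFilter F ∧ (0 : S) ∉ F ∧
    ∀ G : Set S, IsIdemFilter G → (0 : S) ∉ G → F ⊆ G → F = G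

end Filters

section PencilDefs

variable {S : Type u}

/-- `Preceq e f`: there is a pencil from `e` to `f`, i.e. finitely many
elements `x₁, …, xₘ` with `r(xᵢ) ≤ f` for all `i` and `e = ⋁ d(xᵢ)`
(a least upper bound for the natural partial order). -/
def Preceq [DistributiveInverseMonoid S] (e f : S) : Prop :=
  ∃ l : List S, l ≠ [] ∧ (∀ x ∈ l, nle (x * x⁻¹) f) ∧
    (∀ x ∈ l, nle (x⁻¹ * x) e) ∧ ∀ c : S, (∀ x ∈ l, nle (x⁻¹ * x) c) → nle e c

/-- Piecewise factorizable: every element is a finite join of elements each of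
which lies beneath a unit. -/
def PiecewiseFactorizable (S : Type u) [DistributiveInverseMonoid S] : Prop :=
  ∀ s : S, ∃ l : List S, l ≠ [] ∧ (∀ x ∈ l, ∃ g : S, IsUnit g ∧ nle x g) ∧
    (∀ x ∈ l, nle x s) ∧ ∀ c : S, (∀ x ∈ l, nle x c) → nle s c

/-- A properly infinite idempotent. -/
def ProperlyInfinite [DistributiveInverseMonoid S] (e : S) : Prop :=
  ∃ x y : S, x⁻¹ * x = e ∧ y⁻¹ * y = e ∧ Orth (x * x⁻¹) (y * y⁻¹) ∧
    nle (bsup (x * x⁻¹) (y * y⁻¹)) e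

end PencilDefs

/-- Purely infinite: every non-zero idempotent is properly infinite. -/
def PurelyInfinite (S : Type u) [DistributiveInverseMonoid S] : Prop :=
  ∀ e : S, e * e = e → e ≠ 0 → ProperlyInfinite e

/-!
By atomlessness there is an idempotent `k ≠ 0, 1`; with `k'` its complement, every `a` is the
join of the four pieces `k a k`, `k' a k`, `k a k'`, `k' a k'`. The two off-diagonal pieces have
orthogonal domain and range, and such an element `t` lies beneath the involution
`t ∨ t⁻¹ ∨ w`, where `w` is the complement of `t⁻¹t ∨ tt⁻¹`. A diagonal piece `b = e b e`
leaves the nonzero idempotent `f = e'` orthogonal to its domain and range. Since `S` is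
0-simplifying, the ∨-ideal generated by `f` is all of `S`, which yields a pencil from `b⁻¹b` to
`f`: elements `x` with `xx⁻¹ ≤ f` whose domains have join `b⁻¹b`. Then `b` is the join of the
`b x⁻¹x = (b x⁻¹) x`, and both factors again have orthogonal domain and range, so each piece
lies beneath a product of two units.
-/

namespace InverseMonoidWithZero

variable {S : Type u} [InverseMonoidWithZero S] {a b c e f x y : S}

theorem inv_inv' (a : S) : a⁻¹⁻¹ = a :=
  (inv_unique _ _ (inv_mul_inv a) (mul_inv_mul a)).symm

theorem mul_inv_mul' (a : S) : a * (a⁻¹ * a) = a := by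
  rw [← mul_assoc, mul_inv_mul]

theorem inv_mul_self_idem (a : S) : a⁻¹ * a * (a⁻¹ * a) = a⁻¹ * a := by
  rw [← mul_assoc, inv_mul_inv]

theorem mul_inv_self_idem (a : S) : a * a⁻¹ * (a * a⁻¹) = a * a⁻¹ := by
  rw [← mul_assoc, mul_inv_mul]

theorem inv_eq_self_of_idem (he : e * e = e) : e⁻¹ = e :=
  (inv_unique e e (by rw [he, he]) (by rw [he, he])).symm

theorem mul_idem (he : e * e = e) (hf : f * f = f) : e * f * (e * f) = e * f := by
  set z := (e * f)⁻¹
  -- `f * z * e` is also an inverse of `e * f`, hence equal to `z`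
  have hz : f * z * e = z := by
    apply inv_unique
    · calc e * f * (f * z * e) * (e * f) = e * (f * f) * z * (e * e) * f := by
            simp only [mul_assoc]
        _ = e * f * z * (e * f) := by rw [he, hf]; simp only [mul_assoc]
        _ = e * f := mul_inv_mul _
    · calc f * z * e * (e * f) * (f * z * e) = f * (z * (e * e) * (f * f) * z) * e := by
            simp only [mul_assoc]
        _ = f * (z * (e * f) * z) * e := by rw [he, hf]; simp only [mul_assoc]
        _ = f * z * e := by rw [inv_mul_inv]
  have hzz : z * z = z :=
    calc z * z = f * z * e * (f * z * e) := by rw [hz]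
      _ = f * (z * (e * f) * z) * e := by simp only [mul_assoc]
      _ = z := by rw [inv_mul_inv, hz]
  rw [← inv_inv' (e * f), inv_eq_self_of_idem hzz, hzz]

theorem idem_comm (he : e * e = e) (hf : f * f = f) : e * f = f * e := by
  have hfe : f * e = (e * f)⁻¹ := by
    apply inv_unique
    · calc e * f * (f * e) * (e * f) = e * (f * f) * (e * e) * f := by simp only [mul_assoc]
        _ = e * f * (e * f) := by rw [he, hf]; simp only [mul_assoc]
        _ = e * f := mul_idem he hf
    · calc f * e * (e * f) * (f * e) = f * (e * e) * (f * f) * e := by simp only [mul_assoc]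
        _ = f * e * (f * e) := by rw [he, hf]; simp only [mul_assoc]
        _ = f * e := mul_idem hf he
  rw [hfe, inv_eq_self_of_idem (mul_idem he hf)]

theorem mul_inv_rev' (a b : S) : (a * b)⁻¹ = b⁻¹ * a⁻¹ := by
  symm
  apply inv_unique
  · calc a * b * (b⁻¹ * a⁻¹) * (a * b) = a * (b * b⁻¹ * (a⁻¹ * a)) * b := by
          simp only [mul_assoc]
      _ = a * a⁻¹ * a * (b * b⁻¹ * b) := by
          rw [idem_comm (mul_inv_self_idem b) (inv_mul_self_idem a)]; simp only [mul_assoc]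
      _ = a * b := by rw [mul_inv_mul, mul_inv_mul]
  · calc b⁻¹ * a⁻¹ * (a * b) * (b⁻¹ * a⁻¹) = b⁻¹ * (a⁻¹ * a * (b * b⁻¹)) * a⁻¹ := by
          simp only [mul_assoc]
      _ = b⁻¹ * b * b⁻¹ * (a⁻¹ * a * a⁻¹) := by
          rw [idem_comm (inv_mul_self_idem a) (mul_inv_self_idem b)]; simp only [mul_assoc]
      _ = b⁻¹ * a⁻¹ := by rw [inv_mul_inv, inv_mul_inv]

theorem conj_idem (c : S) (he : e * e = e) : c * e * c⁻¹ * (c * e * c⁻¹) = c * e * c⁻¹ :=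
  calc c * e * c⁻¹ * (c * e * c⁻¹) = c * (e * (c⁻¹ * c)) * e * c⁻¹ := by simp only [mul_assoc]
    _ = c * (c⁻¹ * c) * (e * e) * c⁻¹ := by
        rw [idem_comm he (inv_mul_self_idem c)]; simp only [mul_assoc]
    _ = c * e * c⁻¹ := by rw [mul_inv_mul', he]

theorem inv_conj_idem (c : S) (he : e * e = e) : c⁻¹ * e * c * (c⁻¹ * e * c) = c⁻¹ * e * c := by
  simpa only [inv_inv'] using conj_idem c⁻¹ he

theorem orth_inv_of_dom_mul_ran_eq_zero (h : a⁻¹ * a * (a * a⁻¹) = 0) : Orth a a⁻¹ := by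
  have h' : a * a⁻¹ * (a⁻¹ * a) = 0 := by
    rw [idem_comm (mul_inv_self_idem a) (inv_mul_self_idem a), h]
  constructor
  · calc a * a⁻¹⁻¹ = a * (a⁻¹ * a) * (a * a⁻¹ * a) := by rw [inv_inv', mul_inv_mul', mul_inv_mul]
      _ = a * (a⁻¹ * a * (a * a⁻¹)) * a := by simp only [mul_assoc]
      _ = 0 := by rw [h, mul_zero', zero_mul']
  · calc a⁻¹ * a⁻¹ = a⁻¹ * a * a⁻¹ * (a⁻¹ * a * a⁻¹) := by rw [inv_mul_inv]
      _ = a⁻¹ * (a * a⁻¹ * (a⁻¹ * a)) * a⁻¹ := by simp only [mul_assoc]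
      _ = 0 := by rw [h', mul_zero', zero_mul']

theorem mul_eq_zero_of_mul_ran_eq_zero (h : e * (a * a⁻¹) = 0) : e * a = 0 := by
  rw [← mul_inv_mul a, ← mul_assoc, h, zero_mul']

theorem mul_eq_zero_of_dom_mul_eq_zero (h : a⁻¹ * a * e = 0) : a * e = 0 := by
  rw [← mul_inv_mul' a, mul_assoc, h, mul_zero']

theorem inv_mul_eq_zero_of_mul_eq_zero (he : e * e = e) (h : e * a = 0) : a⁻¹ * e = 0 :=
  calc a⁻¹ * e = a⁻¹ * (a * a⁻¹) * e := by rw [← mul_assoc, inv_mul_inv]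
    _ = a⁻¹ * (e * a) * a⁻¹ := by
        rw [mul_assoc a⁻¹, idem_comm (mul_inv_self_idem a) he]; simp only [mul_assoc]
    _ = 0 := by rw [h, mul_zero', zero_mul']

theorem nle_refl (a : S) : nle a a := ⟨a * a⁻¹, mul_inv_self_idem a, (mul_inv_mul a).symm⟩

theorem nle_trans (hab : nle a b) (hbc : nle b c) : nle a c := by
  obtain ⟨e, he, rfl⟩ := hab
  obtain ⟨f, hf, rfl⟩ := hbc
  exact ⟨e * f, mul_idem he hf, (mul_assoc e f c).symm⟩

theorem nle_antisymm (hab : nle a b) (hba : nle b a) : a = b := by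
  obtain ⟨e, he, rfl⟩ := hab
  obtain ⟨f, hf, hfb⟩ := hba
  calc e * b = e * (f * (e * b)) := by rw [← hfb]
    _ = f * (e * e) * b := by rw [← mul_assoc, ← mul_assoc, idem_comm he hf, mul_assoc f e e]
    _ = b := by rw [he, mul_assoc, ← hfb]

theorem zero_nle (a : S) : nle 0 a := ⟨0, zero_mul' 0, (zero_mul' a).symm⟩

theorem nle_one (he : e * e = e) : nle e 1 := ⟨e, he, (mul_one e).symm⟩

theorem nle_of_eq_mul (hm : f * f = f) (h : a = b * f) : nle a b := by
  refine ⟨b * f * b⁻¹, conj_idem b hm, ?_⟩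
  calc a = b * (b⁻¹ * b) * f := by rw [mul_inv_mul', h]
    _ = b * f * b⁻¹ * b := by
        rw [mul_assoc b, idem_comm (inv_mul_self_idem b) hm]; simp only [mul_assoc]

theorem nle_mul_left (c : S) (h : nle a b) : nle (c * a) (c * b) := by
  obtain ⟨e, he, rfl⟩ := h
  refine ⟨c * e * c⁻¹, conj_idem c he, ?_⟩
  calc c * (e * b) = c * (c⁻¹ * c) * e * b := by rw [mul_inv_mul']; simp only [mul_assoc]
    _ = c * e * c⁻¹ * (c * b) := by
        rw [mul_assoc c, idem_comm (inv_mul_self_idem c) he]; simp only [mul_assoc]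

theorem nle_mul_right (c : S) (h : nle a b) : nle (a * c) (b * c) := by
  obtain ⟨e, he, rfl⟩ := h
  exact ⟨e, he, mul_assoc e b c⟩

theorem nle_mul {d : S} (hab : nle a b) (hcd : nle c d) : nle (a * c) (b * d) :=
  nle_trans (nle_mul_right c hab) (nle_mul_left b hcd)

theorem idem_of_nle (hf : f * f = f) (h : nle e f) : e * e = e := by
  obtain ⟨g, hg, rfl⟩ := h
  exact mul_idem hg hf

theorem mul_eq_left_of_nle (hf : f * f = f) (h : nle e f) : e * f = e := by
  obtain ⟨g, -, rfl⟩ := h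
  rw [mul_assoc, hf]

theorem mul_eq_right_of_nle (he : e * e = e) (hf : f * f = f) (h : nle e f) : f * e = e := by
  rw [← idem_comm he hf, mul_eq_left_of_nle hf h]

theorem mul_eq_zero_of_nle_of_nle (he : e * e = e) (hf : f * f = f) (hy : y * y = y)
    (hxe : nle x e) (hyf : nle y f) (hef : e * f = 0) : x * y = 0 := by
  rw [← mul_eq_left_of_nle he hxe, ← mul_eq_right_of_nle hy hf hyf, mul_assoc, ← mul_assoc e,
    hef, zero_mul', mul_zero']

theorem ran_nle_of_nle (h : nle a b) : nle (a * a⁻¹) (b * b⁻¹) := by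
  obtain ⟨e, he, rfl⟩ := h
  refine ⟨e, he, ?_⟩
  rw [mul_inv_rev', inv_eq_self_of_idem he]
  calc e * b * (b⁻¹ * e) = e * (b * b⁻¹ * e) := by simp only [mul_assoc]
    _ = e * (b * b⁻¹) := by rw [idem_comm (mul_inv_self_idem b) he, ← mul_assoc, he]

theorem dom_mul_nle (he : e * e = e) (x : S) : nle ((x * e)⁻¹ * (x * e)) e := by
  refine ⟨_, inv_mul_self_idem (x * e), ?_⟩
  rw [mul_inv_rev', inv_eq_self_of_idem he]
  simp only [mul_assoc, he]

theorem ran_mul_nle (he : e * e = e) (x : S) : nle (e * x * (e * x)⁻¹) e := by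
  refine ⟨_, mul_inv_self_idem (e * x), ?_⟩
  rw [mul_inv_rev', inv_eq_self_of_idem he]
  simp only [mul_assoc, he]

theorem dom_mul_eq_of_nle (he : e * e = e) (h : nle e (b⁻¹ * b)) : (b * e)⁻¹ * (b * e) = e := by
  rw [mul_inv_rev', inv_eq_self_of_idem he, mul_assoc, ← mul_assoc b⁻¹, ← mul_assoc e,
    mul_eq_left_of_nle (inv_mul_self_idem b) h, he]

theorem exists_ran_nle_dom_eq (hf : f * f = f) (hx : x * x = x) (hxf : x = a * f * b) :
    ∃ t : S, nle (t * t⁻¹) f ∧ t⁻¹ * t = x := by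
  set t := f * (b * x)
  have hat : a * t = x := by rw [← mul_assoc, ← mul_assoc, mul_assoc a, ← mul_assoc a, ← hxf, hx]
  have htx : t * x = t := by simp only [t, mul_assoc, hx]
  refine ⟨t, ran_mul_nle hf _, ?_⟩
  calc t⁻¹ * t = t⁻¹ * t * x := by rw [mul_assoc, htx]
    _ = x * (t⁻¹ * t) := idem_comm (inv_mul_self_idem t) hx
    _ = x := by rw [← hat, mul_assoc, mul_inv_mul']

theorem compat_of_nle (ha : nle a c) (hb : nle b c) : Compat a b := by
  obtain ⟨e, he, rfl⟩ := ha
  obtain ⟨f, hf, rfl⟩ := hb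
  constructor
  · have : e * c * (f * c)⁻¹ = e * f * (c * c⁻¹) := by
      rw [mul_inv_rev', inv_eq_self_of_idem hf]
      calc e * c * (c⁻¹ * f) = e * (c * c⁻¹ * f) := by simp only [mul_assoc]
        _ = e * f * (c * c⁻¹) := by rw [idem_comm (mul_inv_self_idem c) hf, mul_assoc]
    rw [this]
    exact mul_idem (mul_idem he hf) (mul_inv_self_idem c)
  · have : (e * c)⁻¹ * (f * c) = c⁻¹ * (e * f) * c := by
      rw [mul_inv_rev', inv_eq_self_of_idem he]; simp only [mul_assoc]
    rw [this]
    exact inv_conj_idem c (mul_idem he hf)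

theorem compat_of_orth (h : Orth a b) : Compat a b := by
  obtain ⟨h1, h2⟩ := h
  exact ⟨by rw [h1, zero_mul'], by rw [h2, zero_mul']⟩

end InverseMonoidWithZero

namespace DistributiveInverseMonoid

open InverseMonoidWithZero

variable {S : Type u} [DistributiveInverseMonoid S] {a b c e f : S}

theorem le_bsup_left (h : Compat a b) : nle a (bsup a b) := le_sup_left a b h

theorem le_bsup_right (h : Compat a b) : nle b (bsup a b) := le_sup_right a b h

theorem bsup_le (h : Compat a b) (hac : nle a c) (hbc : nle b c) : nle (bsup a b) c :=
  sup_le a b c h hac hbc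

theorem mul_bsup (c : S) (h : Compat a b) : c * bsup a b = bsup (c * a) (c * b) :=
  mul_sup a b c h

theorem bsup_mul (c : S) (h : Compat a b) : bsup a b * c = bsup (a * c) (b * c) :=
  sup_mul a b c h

theorem bsup_zero (a : S) : bsup a 0 = a :=
  have h : Compat a 0 := compat_of_nle (nle_refl a) (zero_nle a)
  nle_antisymm (bsup_le h (nle_refl a) (zero_nle a)) (le_bsup_left h)

theorem zero_bsup (a : S) : bsup 0 a = a :=
  have h : Compat 0 a := compat_of_nle (zero_nle a) (nle_refl a)
  nle_antisymm (bsup_le h (zero_nle a) (nle_refl a)) (le_bsup_right h)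

theorem bsup_idem (he : e * e = e) (hf : f * f = f) : bsup e f * bsup e f = bsup e f :=
  idem_of_nle (one_mul 1)
    (bsup_le (compat_of_nle (nle_one he) (nle_one hf)) (nle_one he) (nle_one hf))

end DistributiveInverseMonoid

section ListSup

open InverseMonoidWithZero DistributiveInverseMonoid

variable {S : Type u} [DistributiveInverseMonoid S] {a b u v e f : S} {l l₁ l₂ : List S}

def IsListSup (l : List S) (u : S) : Prop :=
  (∀ x ∈ l, nle x u) ∧ ∀ c : S, (∀ x ∈ l, nle x c) → nle u c

def listSup (l : List S) : S := l.foldr bsup 0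

theorem listSup_cons (y : S) (t : List S) : listSup (y :: t) = bsup y (listSup t) := rfl

theorem isListSup_singleton (a : S) : IsListSup [a] a :=
  ⟨by simpa using nle_refl a, fun _ hc => hc a (List.mem_singleton_self a)⟩

theorem IsListSup.unique (hu : IsListSup l u) (hv : IsListSup l v) : u = v :=
  nle_antisymm (hu.2 v hv.1) (hv.2 u hu.1)

theorem isListSup_listSup (h : ∀ x ∈ l, nle x u) : IsListSup l (listSup l) ∧ nle (listSup l) u := by
  induction l with
  | nil => exact ⟨⟨by simp, fun c _ => zero_nle c⟩, zero_nle u⟩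
  | cons y t ih =>
    obtain ⟨ht, htu⟩ := ih fun x hx => h x (List.mem_cons_of_mem y hx)
    have hyu := h y List.mem_cons_self
    have hc : Compat y (listSup t) := compat_of_nle hyu htu
    refine ⟨⟨?_, fun c hc' => ?_⟩, bsup_le hc hyu htu⟩
    · simp only [List.mem_cons, forall_eq_or_imp]
      exact ⟨le_bsup_left hc, fun x hx => nle_trans (ht.1 x hx) (le_bsup_right hc)⟩
    · exact bsup_le hc (hc' y List.mem_cons_self)
        (ht.2 c fun x hx => hc' x (List.mem_cons_of_mem y hx))

theorem IsListSup.listSup_eq (h : IsListSup l u) : listSup l = u :=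
  (isListSup_listSup h.1).1.unique h

theorem mul_listSup (c : S) (h : ∀ x ∈ l, nle x u) :
    c * listSup l = listSup (l.map (c * ·)) := by
  induction l with
  | nil => exact mul_zero' c
  | cons y t ih =>
    have ht : ∀ x ∈ t, nle x u := fun x hx => h x (List.mem_cons_of_mem y hx)
    rw [List.map_cons, listSup_cons, listSup_cons,
      mul_bsup c (compat_of_nle (h y List.mem_cons_self) (isListSup_listSup ht).2), ih ht]

theorem listSup_mul (c : S) (h : ∀ x ∈ l, nle x u) :
    listSup l * c = listSup (l.map (· * c)) := by
  induction l with
  | nil => exact zero_mul' c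
  | cons y t ih =>
    have ht : ∀ x ∈ t, nle x u := fun x hx => h x (List.mem_cons_of_mem y hx)
    rw [List.map_cons, listSup_cons, listSup_cons,
      bsup_mul c (compat_of_nle (h y List.mem_cons_self) (isListSup_listSup ht).2), ih ht]

theorem IsListSup.map_mul_left (h : IsListSup l u) (c : S) :
    IsListSup (l.map (c * ·)) (c * u) := by
  have hub : ∀ x ∈ l.map (c * ·), nle x (c * u) := by
    simpa using fun x hx => nle_mul_left c (h.1 x hx)
  have := (isListSup_listSup hub).1
  rwa [← mul_listSup c h.1, h.listSup_eq] at this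

theorem IsListSup.map_mul_right (h : IsListSup l u) (c : S) :
    IsListSup (l.map (· * c)) (u * c) := by
  have hub : ∀ x ∈ l.map (· * c), nle x (u * c) := by
    simpa using fun x hx => nle_mul_right c (h.1 x hx)
  have := (isListSup_listSup hub).1
  rwa [← listSup_mul c h.1, h.listSup_eq] at this

theorem IsListSup.append (hu : IsListSup l₁ u) (hv : IsListSup l₂ v) (h : Compat u v) :
    IsListSup (l₁ ++ l₂) (bsup u v) := by
  refine ⟨?_, fun c hc => bsup_le h (hu.2 c fun x hx => hc x (List.mem_append_left l₂ hx))
    (hv.2 c fun x hx => hc x (List.mem_append_right l₁ hx))⟩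
  simp only [List.mem_append]
  rintro x (hx | hx)
  · exact nle_trans (hu.1 x hx) (le_bsup_left h)
  · exact nle_trans (hv.1 x hx) (le_bsup_right h)

def IsPiecewiseFactorizable (s : S) : Prop :=
  ∃ l : List S, l ≠ [] ∧ (∀ x ∈ l, ∃ g : S, IsUnit g ∧ nle x g) ∧ IsListSup l s

theorem IsPiecewiseFactorizable.of_nle {g : S} (hg : IsUnit g) (h : nle a g) :
    IsPiecewiseFactorizable a :=
  ⟨[a], by simp, by simpa using ⟨g, hg, h⟩, isListSup_singleton a⟩

theorem IsPiecewiseFactorizable.sup (h : Compat a b) (ha : IsPiecewiseFactorizable a)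
    (hb : IsPiecewiseFactorizable b) : IsPiecewiseFactorizable (bsup a b) := by
  obtain ⟨la, hla, hua, hsa⟩ := ha
  obtain ⟨lb, -, hub, hsb⟩ := hb
  refine ⟨la ++ lb, by simp [hla], ?_, hsa.append hsb h⟩
  simp only [List.mem_append]
  rintro x (hx | hx)
  exacts [hua x hx, hub x hx]

theorem preceq_of_zeroSimplifying (h0 : ZeroSimplifying S) (hf : f * f = f) (hf0 : f ≠ 0)
    (he : e * e = e) : Preceq e f := by
  -- the ∨-ideal generated by `f`
  set I : Set S := {u | ∃ l : List S, l ≠ [] ∧ (∀ x ∈ l, ∃ a b, x = a * f * b) ∧ IsListSup l u}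
  have hfI : f ∈ I := ⟨[f], by simp, by simpa using ⟨1, 1, by simp⟩, isListSup_singleton f⟩
  have hI : IsVIdeal I := by
    refine ⟨⟨⟨f, hfI⟩, fun u ⟨l, hl, hlf, hlu⟩ s => ⟨?_, ?_⟩⟩,
      fun u ⟨l, hl, hlf, hlu⟩ v ⟨l', _, hlf', hlv⟩ huv => ?_⟩
    · refine ⟨l.map (s * ·), by simpa using hl, ?_, hlu.map_mul_left s⟩
      simp only [List.mem_map]
      rintro _ ⟨x, hx, rfl⟩
      obtain ⟨a, b, rfl⟩ := hlf x hx
      exact ⟨s * a, b, by simp only [mul_assoc]⟩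
    · refine ⟨l.map (· * s), by simpa using hl, ?_, hlu.map_mul_right s⟩
      simp only [List.mem_map]
      rintro _ ⟨x, hx, rfl⟩
      obtain ⟨a, b, rfl⟩ := hlf x hx
      exact ⟨a, b * s, by simp only [mul_assoc]⟩
    · refine ⟨l ++ l', by simp [hl], ?_, hlu.append hlv huv⟩
      simp only [List.mem_append]
      rintro x (hx | hx)
      exacts [hlf x hx, hlf' x hx]
  obtain ⟨l, hl, hlf, hle⟩ : e ∈ I := by
    rcases h0 I hI with h | h
    · rw [h] at hfI
      exact absurd hfI hf0
    · exact h ▸ Set.mem_univ e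
  obtain ⟨ts, rfl⟩ :
      l ∈ Set.range (List.map fun t : {t : S // nle (t * t⁻¹) f} => t.1⁻¹ * t.1) := by
    rw [Set.range_list_map]
    intro x hx
    obtain ⟨a, b, hab⟩ := hlf x hx
    obtain ⟨t, ht, rfl⟩ := exists_ran_nle_dom_eq hf (idem_of_nle he (hle.1 x hx)) hab
    exact ⟨⟨t, ht⟩, rfl⟩
  refine ⟨ts.map Subtype.val, by simpa using hl, ?_, ?_, fun c hc => hle.2 c ?_⟩
  · simpa only [List.forall_mem_map] using fun t _ => t.2
  · simpa only [List.forall_mem_map] using hle.1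
  · simpa only [List.forall_mem_map] using hc

end ListSup

namespace BooleanInverseMonoid

open InverseMonoidWithZero DistributiveInverseMonoid

variable {S : Type u} [BooleanInverseMonoid S] {b e f t : S}

theorem bcompl_idem (he : e * e = e) : bcompl e * bcompl e = bcompl e := compl_idem e he

theorem mul_bcompl (he : e * e = e) : e * bcompl e = 0 := mul_compl e he

theorem bcompl_mul (he : e * e = e) : bcompl e * e = 0 := by
  rw [← idem_comm he (bcompl_idem he), mul_bcompl he]

theorem bsup_bcompl (he : e * e = e) : bsup e (bcompl e) = 1 := sup_compl e he

theorem compat_bcompl (he : e * e = e) : Compat e (bcompl e) :=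
  compat_of_nle (nle_one he) (nle_one (bcompl_idem he))

theorem bcompl_mul_eq_zero_of_nle (he : e * e = e) (hf : f * f = f) (h : nle e f) :
    bcompl f * e = 0 := by
  rw [← mul_eq_right_of_nle he hf h, ← mul_assoc, bcompl_mul hf, zero_mul']

theorem exists_isUnit_nle_of_dom_mul_ran_eq_zero (h : t⁻¹ * t * (t * t⁻¹) = 0) :
    ∃ g : S, IsUnit g ∧ nle t g := by
  set d := t⁻¹ * t
  set r := t * t⁻¹
  have hd : d * d = d := inv_mul_self_idem t
  have hr : r * r = r := mul_inv_self_idem t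
  have htt' := orth_inv_of_dom_mul_ran_eq_zero h
  have htt : t * t = 0 := by rw [← htt'.1, inv_inv']
  set p := bsup t t⁻¹
  have hpp : p * p = bsup d r := by
    rw [mul_bsup p (compat_of_orth htt'), bsup_mul t (compat_of_orth htt'),
      bsup_mul t⁻¹ (compat_of_orth htt'), htt, htt'.2, zero_bsup, bsup_zero]
  have hpd : p * d = t := by
    rw [bsup_mul d (compat_of_orth htt'), mul_inv_mul', ← mul_assoc, htt'.2, zero_mul',
      bsup_zero]
  have hE := bsup_idem hd hr
  have hdr : Compat d r := compat_of_nle (nle_one hd) (nle_one hr)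
  set w := bcompl (bsup d r)
  have hw : w * w = w := bcompl_idem hE
  have hwd : w * d = 0 := bcompl_mul_eq_zero_of_nle hd hE (le_bsup_left hdr)
  have hwr : w * r = 0 := bcompl_mul_eq_zero_of_nle hr hE (le_bsup_right hdr)
  have hdw : d * w = 0 := by rw [idem_comm hd hw, hwd]
  have hrw : r * w = 0 := by rw [idem_comm hr hw, hwr]
  have hwp : w * p = 0 := by
    rw [mul_bsup w (compat_of_orth htt'), mul_eq_zero_of_mul_ran_eq_zero hwr,
      mul_eq_zero_of_mul_ran_eq_zero (a := t⁻¹) (by rw [inv_inv']; exact hwd), bsup_zero]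
  have hpw : p * w = 0 := by
    rw [bsup_mul w (compat_of_orth htt'), mul_eq_zero_of_dom_mul_eq_zero hdw,
      mul_eq_zero_of_dom_mul_eq_zero (a := t⁻¹) (by rw [inv_inv']; exact hrw), bsup_zero]
  have hpw' : Compat p w :=
    compat_of_orth ⟨by rw [inv_eq_self_of_idem hw, hpw], inv_mul_eq_zero_of_mul_eq_zero hw hwp⟩
  set g := bsup p w
  have hgg : g * g = 1 := by
    rw [mul_bsup g hpw', bsup_mul p hpw', bsup_mul w hpw', hpp, hwp, hpw, hw, bsup_zero,
      zero_bsup, bsup_bcompl hE]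
  have hgd : g * d = t := by rw [bsup_mul d hpw', hpd, hwd, bsup_zero]
  exact ⟨g, ⟨⟨g, g, hgg, hgg⟩, rfl⟩, nle_of_eq_mul hd hgd.symm⟩

theorem exists_isUnit_nle_of_dom_eq {ψ : S} (hψ : ψ⁻¹ * ψ = b⁻¹ * b)
    (hd : ψ * ψ⁻¹ * (b⁻¹ * b) = 0) (hr : ψ * ψ⁻¹ * (b * b⁻¹) = 0) :
    ∃ g : S, IsUnit g ∧ nle b g := by
  set χ := b * ψ⁻¹
  have hb : χ * ψ = b := by rw [mul_assoc, hψ, mul_inv_mul']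
  have hχd : χ⁻¹ * χ = ψ * ψ⁻¹ := by
    calc χ⁻¹ * χ = ψ * (b⁻¹ * b) * ψ⁻¹ := by rw [mul_inv_rev', inv_inv']; simp only [χ, mul_assoc]
      _ = ψ * ψ⁻¹ := by rw [← hψ, mul_inv_mul']
  have hχr : χ * χ⁻¹ = b * b⁻¹ := by
    calc χ * χ⁻¹ = b * (ψ⁻¹ * ψ) * b⁻¹ := by rw [mul_inv_rev', inv_inv']; simp only [χ, mul_assoc]
      _ = b * b⁻¹ := by rw [hψ, mul_inv_mul']
  obtain ⟨u, hu, hχu⟩ := exists_isUnit_nle_of_dom_mul_ran_eq_zero (t := χ) (by rw [hχd, hχr, hr])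
  obtain ⟨v, hv, hψv⟩ := exists_isUnit_nle_of_dom_mul_ran_eq_zero (t := ψ)
    (by rw [hψ, idem_comm (inv_mul_self_idem b) (mul_inv_self_idem ψ), hd])
  exact ⟨u * v, hu.mul hv, hb ▸ nle_mul hχu hψv⟩

end BooleanInverseMonoid

section PiecewiseFactorizable

open InverseMonoidWithZero DistributiveInverseMonoid BooleanInverseMonoid

variable {S : Type u} [BooleanInverseMonoid S] {a b e f : S}

theorem IsPiecewiseFactorizable.of_mul_bcompl (he : e * e = e)
    (h₁ : IsPiecewiseFactorizable (a * e)) (h₂ : IsPiecewiseFactorizable (a * bcompl e)) :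
    IsPiecewiseFactorizable a := by
  have ha : a = bsup (a * e) (a * bcompl e) := by
    rw [← mul_bsup a (compat_bcompl he), bsup_bcompl he, mul_one]
  rw [ha]
  exact h₁.sup (compat_of_nle (nle_of_eq_mul he rfl) (nle_of_eq_mul (bcompl_idem he) rfl)) h₂

theorem IsPiecewiseFactorizable.of_bcompl_mul (he : e * e = e)
    (h₁ : IsPiecewiseFactorizable (e * a)) (h₂ : IsPiecewiseFactorizable (bcompl e * a)) :
    IsPiecewiseFactorizable a := by
  have ha : a = bsup (e * a) (bcompl e * a) := by
    rw [← bsup_mul a (compat_bcompl he), bsup_bcompl he, one_mul]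
  rw [ha]
  exact h₁.sup (compat_of_nle ⟨e, he, rfl⟩ ⟨_, bcompl_idem he, rfl⟩) h₂

theorem IsPiecewiseFactorizable.of_mul_dom_eq_zero_of_mul_ran_eq_zero (h0 : ZeroSimplifying S)
    (hf : f * f = f) (hf0 : f ≠ 0) (hd : f * (b⁻¹ * b) = 0) (hr : f * (b * b⁻¹) = 0) :
    IsPiecewiseFactorizable b := by
  obtain ⟨l, hl, hlf, hlb, hlub⟩ := preceq_of_zeroSimplifying h0 hf hf0 (inv_mul_self_idem b)
  have hsup : IsListSup (l.map fun x => b * (x⁻¹ * x)) b := by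
    have : IsListSup (l.map fun x => x⁻¹ * x) (b⁻¹ * b) :=
      ⟨by simpa only [List.forall_mem_map] using hlb,
        fun c hc => hlub c (by simpa only [List.forall_mem_map] using hc)⟩
    simpa only [List.map_map, Function.comp_def, mul_inv_mul'] using this.map_mul_left b
  refine ⟨_, by simpa using hl, ?_, hsup⟩
  simp only [List.forall_mem_map]
  intro x hx
  have hxd := inv_mul_self_idem x
  refine exists_isUnit_nle_of_dom_eq (ψ := x) (dom_mul_eq_of_nle hxd (hlb x hx)).symm ?_ ?_
  · rw [dom_mul_eq_of_nle hxd (hlb x hx)]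
    exact mul_eq_zero_of_nle_of_nle hf (inv_mul_self_idem b) hxd (hlf x hx) (hlb x hx) hd
  · exact mul_eq_zero_of_nle_of_nle hf (mul_inv_self_idem b) (mul_inv_self_idem _) (hlf x hx)
      (ran_nle_of_nle (nle_of_eq_mul hxd rfl)) hr

theorem IsPiecewiseFactorizable.of_corner (h0 : ZeroSimplifying S) (he : e * e = e)
    (hf : f * f = f) (hf0 : f ≠ 0) (hfe : f * e = 0) (x : S) :
    IsPiecewiseFactorizable (e * (x * e)) := by
  have hd : nle ((e * (x * e))⁻¹ * (e * (x * e))) e := by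
    rw [← mul_assoc _ x e]; exact dom_mul_nle he _
  refine .of_mul_dom_eq_zero_of_mul_ran_eq_zero h0 hf hf0 ?_ ?_
  · exact mul_eq_zero_of_nle_of_nle hf he (inv_mul_self_idem _) (nle_refl f) hd hfe
  · exact mul_eq_zero_of_nle_of_nle hf he (mul_inv_self_idem _) (nle_refl f)
      (ran_mul_nle he _) hfe

theorem IsPiecewiseFactorizable.of_mul_eq_zero (he : e * e = e) (hf : f * f = f)
    (hef : e * f = 0) (x : S) : IsPiecewiseFactorizable (f * (x * e)) := by
  have hd : nle ((f * (x * e))⁻¹ * (f * (x * e))) e := by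
    rw [← mul_assoc _ x e]; exact dom_mul_nle he _
  obtain ⟨g, hg, hbg⟩ := exists_isUnit_nle_of_dom_mul_ran_eq_zero
    (mul_eq_zero_of_nle_of_nle he hf (mul_inv_self_idem _) hd (ran_mul_nle hf _) hef)
  exact .of_nle hg hbg

end PiecewiseFactorizable

theorem statement11_general (S : Type u) [BooleanInverseMeetMonoid S]
    (hat : IdemAtomless S) (h0 : ZeroSimplifying S) :
    PiecewiseFactorizable S := by
  intro a
  show IsPiecewiseFactorizable a
  by_cases h1 : (1 : S) = 0
  · have ha : a = 0 := by rw [← mul_one a, h1, InverseMonoidWithZero.mul_zero']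
    exact .of_nle isUnit_one (ha ▸ InverseMonoidWithZero.zero_nle 1)
  obtain ⟨k, hk, hk0, -, hk1⟩ := hat 1 (one_mul 1) h1
  have hkc := BooleanInverseMonoid.bcompl_idem hk
  have hkc0 : bcompl k ≠ 0 := fun h => hk1 (by
    rw [← BooleanInverseMonoid.bsup_bcompl hk, h, DistributiveInverseMonoid.bsup_zero])
  refine .of_mul_bcompl hk (.of_bcompl_mul hk ?_ ?_) (.of_bcompl_mul hk ?_ ?_)
  · exact .of_corner h0 hk hkc hkc0 (BooleanInverseMonoid.bcompl_mul hk) a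
  · exact .of_mul_eq_zero hk hkc (BooleanInverseMonoid.mul_bcompl hk) a
  · exact .of_mul_eq_zero hkc hk (BooleanInverseMonoid.bcompl_mul hk) a
  · exact .of_corner h0 hkc hk hk0 (BooleanInverseMonoid.mul_bcompl hk) a

/-- Every 0-simplifying Tarski monoid is piecewise
factorizable. -/
theorem statement11 (S : Type u) [BooleanInverseMeetMonoid S] [Countable S]
    (hat : IdemAtomless S) (h0 : ZeroSimplifying S) :
    PiecewiseFactorizable S :=
  statement11_general S hat h0
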